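/- arXiv:math/0610897 — 5 statements merged into one kernel-verified Lean document; each statement's English description precedes it below -/
import Mathlib

section
/- The subalgebra of R(f) generated by F and H is isomorphic to the universal enveloping algebra of the two-dimensional non-abelian Lie algebra (with basis x, y and bracket [x,y] = -y, matching [H,F] = -F). -/
open Polynomial

inductive SmithGen : Type
  | E | F | H

open SmithGen in
inductive SmithRel (f : ℂ[X]) : FreeAlgebra ℂ SmithGen → FreeAlgebra ℂ SmithGen → Prop
  | ef : SmithRel f (FreeAlgebra.ι ℂ E * FreeAlgebra.ι ℂ F - FreeAlgebra.ι ℂ F * FreeAlgebra.ι ℂ E)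
      (aeval (FreeAlgebra.ι ℂ H) f)
  | he : SmithRel f (FreeAlgebra.ι ℂ H * FreeAlgebra.ι ℂ E - FreeAlgebra.ι ℂ E * FreeAlgebra.ι ℂ H)
      (FreeAlgebra.ι ℂ E)
  | hf : SmithRel f (FreeAlgebra.ι ℂ H * FreeAlgebra.ι ℂ F - FreeAlgebra.ι ℂ F * FreeAlgebra.ι ℂ H)
      (-FreeAlgebra.ι ℂ F)

/-- Smith's algebra `R(f)`, similar to `U(sl₂)`. -/
abbrev SmithAlgebra (f : ℂ[X]) : Type := RingQuot (SmithRel f)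

noncomputable def SmithE (f : ℂ[X]) : SmithAlgebra f :=
  RingQuot.mkAlgHom ℂ (SmithRel f) (FreeAlgebra.ι ℂ SmithGen.E)

noncomputable def SmithF (f : ℂ[X]) : SmithAlgebra f :=
  RingQuot.mkAlgHom ℂ (SmithRel f) (FreeAlgebra.ι ℂ SmithGen.F)

noncomputable def SmithH (f : ℂ[X]) : SmithAlgebra f :=
  RingQuot.mkAlgHom ℂ (SmithRel f) (FreeAlgebra.ι ℂ SmithGen.H)

/-- The Casimir element `Ω = 2FE + u(H+1)`. -/
noncomputable def SmithOmega (f u : ℂ[X]) : SmithAlgebra f :=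
  2 * SmithF f * SmithE f + aeval (SmithH f) (u.comp (X + 1))

/-- `x = E₂₂` and `y = E₁₂` in `gl₂(ℂ)` satisfy `⁅x, y⁆ = -y`; they span a copy of the
two-dimensional non-abelian Lie algebra. -/
noncomputable def twoDimX : Matrix (Fin 2) (Fin 2) ℂ := Matrix.single 1 1 1

noncomputable def twoDimY : Matrix (Fin 2) (Fin 2) ℂ := Matrix.single 0 1 1

attribute [local instance 100] LieRing.ofAssociativeRing

/-- The two-dimensional non-abelian Lie algebra, realized as the Lie span of `x, y`. -/
noncomputable def twoDimNonabelian : LieSubalgebra ℂ (Matrix (Fin 2) (Fin 2) ℂ) :=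
  LieSubalgebra.lieSpan ℂ _ {twoDimX, twoDimY}

/-!
Sending `x ↦ H`, `y ↦ F` respects `⁅x, y⁆ = -y`, so it induces a surjection from `U(𝔟)`
(`𝔟 = twoDimNonabelian`) onto the subalgebra `ℂ⟨F, H⟩`. Reordering with `x y = y x - y` shows that the monomials `yᵃ xᵇ` span
`U(𝔟)`, so injectivity amounts to the linear independence of the `Fᵃ Hᵇ` in `R(f)`. That is seen
on the module `ℂ[X][Y]` (written `ℂ[X][X]`, the outer variable being `Y`), where
`F (g Yⁱ) = g Yⁱ⁺¹`, `H (g Yⁱ) = (X - i) g Yⁱ` and `E (g Yⁱ) = λᵢ g Yⁱ⁻¹` with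
`λᵢ = ∑_{j<i} f(X - j)`, chosen so that `λᵢ₊₁ - λᵢ = f(X - i)` gives `EF - FE = f(H)`.
There `Fᵃ Hᵇ · 1 = Xᵇ Yᵃ`, and these are linearly independent.
-/

theorem LieSubalgebra.coe_lieSpan_eq_span_of_lie_mem {R L : Type*} [CommRing R] [LieRing L]
    [LieAlgebra R L] {s : Set L}
    (hs : ∀ x ∈ Submodule.span R s, ∀ y ∈ Submodule.span R s, ⁅x, y⁆ ∈ Submodule.span R s) :
    (lieSpan R L s : Submodule R L) = Submodule.span R s :=
  le_antisymm
    ((lieSpan_le (K := { Submodule.span R s with lie_mem' := fun hx hy => hs _ hx _ hy })).mpr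
      Submodule.subset_span)
    submodule_span_le_lieSpan

theorem lie_smul_add_smul_of_lie_eq_neg {R L : Type*} [CommRing R] [LieRing L] [LieAlgebra R L]
    {u v : L} (huv : ⁅u, v⁆ = -v) (a b c d : R) :
    ⁅a • u + b • v, c • u + d • v⁆ = (b * c - a * d) • v := by
  simp only [add_lie, lie_add, smul_lie, lie_smul, lie_self, ← lie_skew v u, huv]
  module

theorem mul_pow_eq_of_mul_eq_mul_sub {A : Type*} [Ring A] {x y : A} (h : x * y = y * x - y)
    (n : ℕ) : x * y ^ n = y ^ n * x - n • y ^ n := by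
  induction n with
  | zero => simp
  | succ n ih =>
    rw [pow_succ, ← mul_assoc, ih, sub_mul, mul_assoc, h, mul_sub, ← mul_assoc, ← pow_succ,
      smul_mul_assoc, ← pow_succ, succ_nsmul]
    abel

theorem UniversalEnvelopingAlgebra.adjoin_range_ι (R L : Type*) [CommRing R] [LieRing L]
    [LieAlgebra R L] :
    Algebra.adjoin R (Set.range (ι R (L := L))) = ⊤ := by
  have : Set.range (ι R (L := L)) = mkAlgHom R L '' Set.range (TensorAlgebra.ι R) := by
    rw [← Set.range_comp]; rfl
  rw [this, Algebra.adjoin_image, TensorAlgebra.adjoin_range_ι, Algebra.map_top,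
    AlgHom.range_eq_top]
  exact RingCon.mkₐ_surjective _

theorem UniversalEnvelopingAlgebra.submodule_eq_top_of_ι_mul_mem {R L : Type*} [CommRing R]
    [LieRing L] [LieAlgebra R L] {S : Submodule R (UniversalEnvelopingAlgebra R L)} (h1 : 1 ∈ S)
    (hmul : ∀ m, ∀ s ∈ S, ι R m * s ∈ S) : S = ⊤ := by
  have mul_mem (u : UniversalEnvelopingAlgebra R L) : ∀ s ∈ S, u * s ∈ S := by
    have hu : u ∈ Algebra.adjoin R (Set.range (ι R (L := L))) := by
      rw [adjoin_range_ι]; trivial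
    induction hu using Algebra.adjoin_induction with
    | mem _ hz =>
      obtain ⟨m, rfl⟩ := hz
      exact hmul m
    | algebraMap r =>
      intro s hs
      rw [Algebra.algebraMap_eq_smul_one, smul_mul_assoc, one_mul]
      exact S.smul_mem r hs
    | add u v _ _ hu hv => exact fun s hs => (add_mul u v s).symm ▸ add_mem (hu s hs) (hv s hs)
    | mul u v _ _ hu hv => exact fun s hs => (mul_assoc u v s).symm ▸ hu _ (hv s hs)
  exact eq_top_iff.mpr fun u _ => mul_one u ▸ mul_mem u 1 h1

theorem lie_twoDimX_twoDimY : ⁅twoDimX, twoDimY⁆ = -twoDimY := by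
  simp [twoDimX, twoDimY, Ring.lie_def]

theorem mem_twoDimNonabelian_iff {m : Matrix (Fin 2) (Fin 2) ℂ} :
    m ∈ twoDimNonabelian ↔ ∃ a b : ℂ, a • twoDimX + b • twoDimY = m := by
  rw [← Submodule.mem_span_pair, ← LieSubalgebra.coe_lieSpan_eq_span_of_lie_mem]
  · rfl
  simp only [Submodule.mem_span_pair]
  rintro _ ⟨a, b, rfl⟩ _ ⟨c, d, rfl⟩
  refine ⟨0, b * c - a * d, ?_⟩
  rw [lie_smul_add_smul_of_lie_eq_neg lie_twoDimX_twoDimY, zero_smul, zero_add]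

noncomputable section

namespace twoDimNonabelian

def x : twoDimNonabelian := ⟨twoDimX, LieSubalgebra.subset_lieSpan (by simp)⟩

def y : twoDimNonabelian := ⟨twoDimY, LieSubalgebra.subset_lieSpan (by simp)⟩

theorem eq_smul_x_add_smul_y (m : twoDimNonabelian) : ∃ a b : ℂ, m = a • x + b • y := by
  obtain ⟨a, b, h⟩ := mem_twoDimNonabelian_iff.mp m.2
  exact ⟨a, b, Subtype.ext h.symm⟩

theorem lie_x_y : ⁅x, y⁆ = -y :=
  Subtype.ext lie_twoDimX_twoDimY

variable {A : Type*} [Ring A] [Algebra ℂ A]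

/-- `m 1 1` and `m 0 1` are the coordinates of `m` in the basis `x, y`. -/
def linearMap (h e : A) : twoDimNonabelian →ₗ[ℂ] A :=
  ((Matrix.entryLinearMap ℂ ℂ (1 : Fin 2) (1 : Fin 2)).smulRight h +
    (Matrix.entryLinearMap ℂ ℂ (0 : Fin 2) (1 : Fin 2)).smulRight e).comp
    (twoDimNonabelian : Submodule ℂ (Matrix (Fin 2) (Fin 2) ℂ)).subtype

theorem linearMap_x (h e : A) : linearMap h e x = h := by
  change twoDimX 1 1 • h + twoDimX 0 1 • e = h
  simp [twoDimX]

theorem linearMap_y (h e : A) : linearMap h e y = e := by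
  change twoDimY 1 1 • h + twoDimY 0 1 • e = e
  simp [twoDimY]

def lieHom (h e : A) (hhe : h * e - e * h = -e) : twoDimNonabelian →ₗ⁅ℂ⁆ A :=
  { linearMap h e with
    map_lie' := by
      intro m n
      obtain ⟨a, b, rfl⟩ := eq_smul_x_add_smul_y m
      obtain ⟨c, d, rfl⟩ := eq_smul_x_add_smul_y n
      change linearMap h e _ = ⁅linearMap h e _, linearMap h e _⁆
      simp only [lie_smul_add_smul_of_lie_eq_neg lie_x_y, map_add, map_smul, linearMap_x,
        linearMap_y]
      rw [lie_smul_add_smul_of_lie_eq_neg ((Ring.lie_def h e).trans hhe)] }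

theorem lieHom_x (h e : A) (hhe : h * e - e * h = -e) : lieHom h e hhe x = h :=
  linearMap_x h e

theorem lieHom_y (h e : A) (hhe : h * e - e * h = -e) : lieHom h e hhe y = e :=
  linearMap_y h e

open UniversalEnvelopingAlgebra

theorem ι_x_mul_ι_y : ι ℂ x * ι ℂ y = ι ℂ y * ι ℂ x - ι ℂ y := by
  have h := (ι ℂ).map_lie x y
  rw [lie_x_y, map_neg, Ring.lie_def] at h
  rw [sub_eq_iff_eq_add.mp h.symm, neg_add_eq_sub]

theorem span_pow_y_mul_pow_x :
    Submodule.span ℂ (Set.range fun ab : ℕ × ℕ => ι ℂ y ^ ab.1 * ι ℂ x ^ ab.2) = ⊤ := by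
  set S := Submodule.span ℂ (Set.range fun ab : ℕ × ℕ => ι ℂ y ^ ab.1 * ι ℂ x ^ ab.2)
  have mem_S (a b : ℕ) : ι ℂ y ^ a * ι ℂ x ^ b ∈ S := Submodule.subset_span ⟨(a, b), rfl⟩
  have x_mul : S ≤ S.comap (LinearMap.mulLeft ℂ (ι ℂ x)) := by
    refine Submodule.span_le.mpr (Set.range_subset_iff.mpr fun ⟨a, b⟩ => ?_)
    change ι ℂ x * (ι ℂ y ^ a * ι ℂ x ^ b) ∈ S
    rw [← mul_assoc, mul_pow_eq_of_mul_eq_mul_sub ι_x_mul_ι_y, sub_mul, mul_assoc, ← pow_succ',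
      smul_mul_assoc]
    exact sub_mem (mem_S a (b + 1)) (S.smul_of_tower_mem _ (mem_S a b))
  have y_mul : S ≤ S.comap (LinearMap.mulLeft ℂ (ι ℂ y)) := by
    refine Submodule.span_le.mpr (Set.range_subset_iff.mpr fun ⟨a, b⟩ => ?_)
    change ι ℂ y * (ι ℂ y ^ a * ι ℂ x ^ b) ∈ S
    rw [← mul_assoc, ← pow_succ']
    exact mem_S (a + 1) b
  refine submodule_eq_top_of_ι_mul_mem (by simpa using mem_S 0 0) fun m s hs => ?_
  obtain ⟨a, b, rfl⟩ := eq_smul_x_add_smul_y m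
  rw [map_add, map_smul, map_smul, add_mul, smul_mul_assoc, smul_mul_assoc]
  exact add_mem (S.smul_mem a (x_mul hs)) (S.smul_mem b (y_mul hs))

section Adjoin

variable (h e : A) (hhe : h * e - e * h = -e)

def liftAdjoin : UniversalEnvelopingAlgebra ℂ twoDimNonabelian →ₐ[ℂ] Algebra.adjoin ℂ {e, h} :=
  lift ℂ <| lieHom ⟨h, Algebra.subset_adjoin (by simp)⟩ ⟨e, Algebra.subset_adjoin (by simp)⟩
    (Subtype.ext hhe)

theorem liftAdjoin_x : liftAdjoin h e hhe (ι ℂ x) = ⟨h, Algebra.subset_adjoin (by simp)⟩ := by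
  rw [liftAdjoin, lift_ι_apply, lieHom_x]

theorem liftAdjoin_y : liftAdjoin h e hhe (ι ℂ y) = ⟨e, Algebra.subset_adjoin (by simp)⟩ := by
  rw [liftAdjoin, lift_ι_apply, lieHom_y]

theorem liftAdjoin_surjective : Function.Surjective (liftAdjoin h e hhe) := by
  rw [← AlgHom.range_eq_top, eq_top_iff, ← Algebra.adjoin_adjoin_coe_preimage,
    Algebra.adjoin_le_iff]
  rintro z (hz | hz)
  · exact ⟨ι ℂ y, (liftAdjoin_y h e hhe).trans (Subtype.ext hz.symm)⟩
  · exact ⟨ι ℂ x, (liftAdjoin_x h e hhe).trans (Subtype.ext hz.symm)⟩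

theorem liftAdjoin_injective
    (hli : LinearIndependent ℂ fun ab : ℕ × ℕ => e ^ ab.1 * h ^ ab.2) :
    Function.Injective (liftAdjoin h e hhe) := by
  refine LinearMap.injective_of_linearIndependent (f := (liftAdjoin h e hhe).toLinearMap)
    span_pow_y_mul_pow_x (LinearIndependent.of_comp (Algebra.adjoin ℂ {e, h}).val.toLinearMap ?_)
  have hv : (Algebra.adjoin ℂ {e, h}).val.toLinearMap ∘ (liftAdjoin h e hhe).toLinearMap ∘
      (fun ab : ℕ × ℕ => ι ℂ y ^ ab.1 * ι ℂ x ^ ab.2) = fun ab => e ^ ab.1 * h ^ ab.2 := by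
    funext ab
    simp only [Function.comp_apply, AlgHom.toLinearMap_apply, map_mul, map_pow, liftAdjoin_x,
      liftAdjoin_y]
    rfl
  exact hv ▸ hli

def equivAdjoin (hli : LinearIndependent ℂ fun ab : ℕ × ℕ => e ^ ab.1 * h ^ ab.2) :
    Algebra.adjoin ℂ {e, h} ≃ₐ[ℂ] UniversalEnvelopingAlgebra ℂ twoDimNonabelian :=
  (AlgEquiv.ofBijective _ ⟨liftAdjoin_injective h e hhe hli, liftAdjoin_surjective h e hhe⟩).symm

theorem equivAdjoin_h (hli : LinearIndependent ℂ fun ab : ℕ × ℕ => e ^ ab.1 * h ^ ab.2) :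
    equivAdjoin h e hhe hli ⟨h, Algebra.subset_adjoin (by simp)⟩ = ι ℂ x :=
  (AlgEquiv.symm_apply_eq _).mpr (liftAdjoin_x h e hhe).symm

theorem equivAdjoin_e (hli : LinearIndependent ℂ fun ab : ℕ × ℕ => e ^ ab.1 * h ^ ab.2) :
    equivAdjoin h e hhe hli ⟨e, Algebra.subset_adjoin (by simp)⟩ = ι ℂ y :=
  (AlgEquiv.symm_apply_eq _).mpr (liftAdjoin_y h e hhe).symm

end Adjoin

end twoDimNonabelian

end

noncomputable section

namespace SmithAlgebra

variable (f : ℂ[X])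

theorem H_mul_F_sub_F_mul_H : SmithH f * SmithF f - SmithF f * SmithH f = -SmithF f := by
  simpa only [SmithH, SmithF, map_sub, map_mul, map_neg] using
    RingQuot.mkAlgHom_rel ℂ (SmithRel.hf (f := f))

def weight (i : ℕ) : ℂ[X] := ∑ j ∈ Finset.range i, f.comp (X - C (j : ℂ))

def lowerOp : Module.End ℂ[X] ℂ[X][X] :=
  lsum fun i => (monomial (i - 1)).comp (LinearMap.mulLeft ℂ[X] (weight f i))

def raiseOp : Module.End ℂ[X] ℂ[X][X] := LinearMap.mulLeft ℂ[X] X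

def weightOp : Module.End ℂ[X] ℂ[X][X] :=
  LinearMap.mulLeft ℂ[X] (C X) - (LinearMap.mulLeft ℂ[X] X).comp derivative

theorem lowerOp_monomial (i : ℕ) (g : ℂ[X]) :
    lowerOp f (monomial i g) = monomial (i - 1) (weight f i * g) := by
  simp [lowerOp]

theorem raiseOp_monomial (i : ℕ) (g : ℂ[X]) :
    raiseOp (monomial i g) = monomial (i + 1) g := by
  simp [raiseOp, X_mul_monomial]

theorem weightOp_monomial (i : ℕ) (g : ℂ[X]) :
    weightOp (monomial i g) = monomial i ((X - C (i : ℂ)) * g) := by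
  rcases i with _ | i
  · simp [weightOp]
  · simp only [weightOp, LinearMap.sub_apply, LinearMap.mulLeft_apply, C_mul_monomial,
      LinearMap.coe_comp, Function.comp_apply, derivative_monomial_succ, X_mul_monomial, ← map_sub,
      Nat.cast_add, Nat.cast_one, map_add, map_natCast, map_one]
    congr 1
    ring

theorem weightOp_pow_monomial (n i : ℕ) (g : ℂ[X]) :
    (weightOp ^ n) (monomial i g) = monomial i ((X - C (i : ℂ)) ^ n * g) := by
  induction n with
  | zero => simp
  | succ n ih => rw [pow_succ', Module.End.mul_apply, ih, weightOp_monomial, pow_succ', mul_assoc]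

theorem aeval_weightOp_monomial (p : ℂ[X]) (i : ℕ) (g : ℂ[X]) :
    aeval weightOp p (monomial i g) = monomial i (p.comp (X - C (i : ℂ)) * g) := by
  induction p using Polynomial.induction_on' with
  | add p q hp hq => rw [map_add, LinearMap.add_apply, hp, hq, add_comp, add_mul, map_add]
  | monomial n a =>
    rw [aeval_monomial, Module.End.mul_apply, weightOp_pow_monomial, Module.algebraMap_end_apply,
      smul_monomial, monomial_comp, smul_eq_C_mul, mul_assoc]

theorem weight_succ (i : ℕ) : weight f (i + 1) = weight f i + f.comp (X - C (i : ℂ)) :=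
  Finset.sum_range_succ _ _

theorem lowerOp_comm_raiseOp : lowerOp f * raiseOp - raiseOp * lowerOp f = aeval weightOp f := by
  refine lhom_ext' fun i => LinearMap.ext fun g => ?_
  simp only [LinearMap.comp_apply, LinearMap.sub_apply, Module.End.mul_apply, lowerOp_monomial,
    raiseOp_monomial, aeval_weightOp_monomial]
  rcases i with _ | i
  · simp [weight]
  · rw [Nat.add_sub_cancel, Nat.add_sub_cancel, ← map_sub, weight_succ, add_mul,
      add_sub_cancel_left]

theorem weightOp_comm_lowerOp : weightOp * lowerOp f - lowerOp f * weightOp = lowerOp f := by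
  refine lhom_ext' fun i => LinearMap.ext fun g => ?_
  simp only [LinearMap.comp_apply, LinearMap.sub_apply, Module.End.mul_apply, lowerOp_monomial,
    weightOp_monomial]
  rcases i with _ | i
  · simp [weight]
  · rw [Nat.add_sub_cancel, ← map_sub]
    congr 1
    simp only [map_natCast]
    push_cast
    ring

theorem weightOp_comm_raiseOp : weightOp * raiseOp - raiseOp * weightOp = -raiseOp := by
  refine lhom_ext' fun i => LinearMap.ext fun g => ?_
  simp only [LinearMap.comp_apply, LinearMap.sub_apply, LinearMap.neg_apply, Module.End.mul_apply,
    raiseOp_monomial, weightOp_monomial, ← map_sub, ← map_neg]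
  congr 1
  simp only [map_natCast]
  push_cast
  ring

def rep : SmithAlgebra f →ₐ[ℂ] Module.End ℂ[X] ℂ[X][X] :=
  RingQuot.liftAlgHom ℂ ⟨FreeAlgebra.lift ℂ fun
    | .E => lowerOp f
    | .F => raiseOp
    | .H => weightOp, by
      rintro _ _ ⟨⟩ <;> simp only [map_sub, map_mul, map_neg, FreeAlgebra.lift_ι_apply]
      · rw [← aeval_algHom_apply, FreeAlgebra.lift_ι_apply]
        exact lowerOp_comm_raiseOp f
      · exact weightOp_comm_lowerOp f
      · exact weightOp_comm_raiseOp⟩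

theorem rep_F : rep f (SmithF f) = raiseOp :=
  (RingQuot.liftAlgHom_mkAlgHom_apply _ _ _ _).trans (FreeAlgebra.lift_ι_apply _ _)

theorem rep_H : rep f (SmithH f) = weightOp :=
  (RingQuot.liftAlgHom_mkAlgHom_apply _ _ _ _).trans (FreeAlgebra.lift_ι_apply _ _)

theorem raiseOp_pow_monomial (n i : ℕ) (g : ℂ[X]) :
    (raiseOp ^ n) (monomial i g) = monomial (i + n) g := by
  induction n with
  | zero => simp
  | succ n ih => rw [pow_succ', Module.End.mul_apply, ih, raiseOp_monomial, add_assoc]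

theorem rep_F_pow_mul_H_pow_one (a b : ℕ) :
    rep f (SmithF f ^ a * SmithH f ^ b) 1 = monomial a ((X : ℂ[X]) ^ b) := by
  rw [map_mul, map_pow, map_pow, rep_F, rep_H, Module.End.mul_apply, ← monomial_zero_one,
    weightOp_pow_monomial, raiseOp_pow_monomial]
  simp

theorem linearIndependent_monomial_X_pow :
    LinearIndependent ℂ fun ab : ℕ × ℕ => (monomial ab.1 ((X : ℂ[X]) ^ ab.2) : ℂ[X][X]) := by
  have h := ((basisMonomials ℂ).smulTower (basisMonomials ℂ[X])).linearIndependent.comp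
    Prod.swap Prod.swap_injective
  convert h with ab
  rw [Function.comp_apply, Module.Basis.smulTower_apply, coe_basisMonomials, coe_basisMonomials,
    smul_monomial, smul_eq_mul, mul_one, X_pow_eq_monomial]
  rfl

theorem linearIndependent_F_pow_mul_H_pow :
    LinearIndependent ℂ fun ab : ℕ × ℕ => SmithF f ^ ab.1 * SmithH f ^ ab.2 := by
  refine LinearIndependent.of_comp ((LinearMap.applyₗ' ℂ 1).comp (rep f).toLinearMap) ?_
  convert linearIndependent_monomial_X_pow with ab
  exact rep_F_pow_mul_H_pow_one f ab.1 ab.2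

end SmithAlgebra

end

/-- The subalgebra of `R(f)` generated by `F` and `H` is isomorphic to the universal
enveloping algebra of the two-dimensional non-abelian Lie algebra, with `H ↦ x`, `F ↦ y`
(where `⁅x, y⁆ = -y`, matching `[H, F] = -F`). -/
theorem smith_RFH_iso_uea (f : ℂ[X]) :
    ∃ e : Algebra.adjoin ℂ {SmithF f, SmithH f} ≃ₐ[ℂ]
        UniversalEnvelopingAlgebra ℂ twoDimNonabelian,
      e ⟨SmithH f, Algebra.subset_adjoin (by simp)⟩ =
          UniversalEnvelopingAlgebra.ι ℂ ⟨twoDimX, LieSubalgebra.subset_lieSpan (by simp)⟩ ∧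
      e ⟨SmithF f, Algebra.subset_adjoin (by simp)⟩ =
          UniversalEnvelopingAlgebra.ι ℂ ⟨twoDimY, LieSubalgebra.subset_lieSpan (by simp)⟩ := by
  have hli := SmithAlgebra.linearIndependent_F_pow_mul_H_pow f
  exact ⟨_, twoDimNonabelian.equivAdjoin_h _ _ (SmithAlgebra.H_mul_F_sub_F_mul_H f) hli,
    twoDimNonabelian.equivAdjoin_e _ _ (SmithAlgebra.H_mul_F_sub_F_mul_H f) hli⟩
end

section
/- Given a nonsingular character η: R(E) → ℂ (an algebra homomorphism with η(E) ≠ 0), one has the direct sum decomposition R(f) = R(F,H) ⊕ R(f)·R_η(E) as vector spaces, where R_η(E) = ker η. -/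
open Polynomial

/-- The subalgebra `R(E)` of `R(f)` generated by `E`. -/
noncomputable def SmithRE (f : ℂ[X]) : Subalgebra ℂ (SmithAlgebra f) :=
  Algebra.adjoin ℂ {SmithE f}

/-- The subalgebra `R(F,H)` of `R(f)` generated by `F` and `H`. -/
noncomputable def SmithRFH (f : ℂ[X]) : Subalgebra ℂ (SmithAlgebra f) :=
  Algebra.adjoin ℂ {SmithF f, SmithH f}

/-- `E` as an element of `R(E)`. -/
noncomputable def SmithE' (f : ℂ[X]) : SmithRE f :=
  ⟨SmithE f, Algebra.self_mem_adjoin_singleton ℂ _⟩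

/-- The subspace `R(f)·R_η(E)` of `R(f)`, where `R_η(E) = ker η`. -/
noncomputable def SmithEtaIdeal (f : ℂ[X]) (η : SmithRE f →ₐ[ℂ] ℂ) :
    Submodule ℂ (SmithAlgebra f) :=
  Submodule.span ℂ {z | ∃ (r : SmithAlgebra f) (x : SmithRE f), η x = 0 ∧ z = r * (x : SmithAlgebra f)}



/-!
The induced module `R(f) ⊗_{R(E)} ℂ_λ`, `λ = η(E)`, is modelled concretely on `ℕ →₀ ℂ[X]`, with
`single a h` standing for `F^a h(H) ⊗ 1`; checking the three defining relations on this model makes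
it a representation `ρ` of `R(f)`. The map `θ : r ↦ ρ(r)(1 ⊗ 1)` kills `R(f)·R_η(E)` because
`1 ⊗ 1` is an `η`-eigenvector of `R(E)`, and it sends `F^a h(H)` to `single a h`; since these
elements span `R(F,H)`, `θ` is injective there, so the sum is direct. Conversely
`R(F,H) + R(f)·R_η(E)` contains `1` and is stable under left multiplication by `F`, `H` and, using
`E·R(F,H) ⊆ R(F,H)·E + R(F,H)` and `E ≡ λ` modulo `R_η(E)`, by `E`; so it is all of `R(f)`.
-/

open Polynomial Finsupp

theorem Algebra.toSubmodule_adjoin_le_of_mul_mem {R A : Type*} [CommSemiring R] [Semiring A]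
    [Algebra R A] {s : Set A} {M : Submodule R A} (h1 : 1 ∈ M)
    (hmul : ∀ a ∈ s, ∀ m ∈ M, a * m ∈ M) :
    Subalgebra.toSubmodule (Algebra.adjoin R s) ≤ M := by
  intro x hx
  suffices ∀ m ∈ M, x * m ∈ M by simpa using this 1 h1
  induction hx using Algebra.adjoin_induction with
  | mem a ha => exact hmul a ha
  | algebraMap c => exact fun m hm => (Algebra.smul_def c m).symm ▸ M.smul_mem c hm
  | add a b _ _ ha hb => exact fun m hm => (add_mul a b m).symm ▸ M.add_mem (ha m hm) (hb m hm)
  | mul a b _ _ ha hb => exact fun m hm => (mul_assoc a b m).symm ▸ ha _ (hb m hm)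

section Relations

variable (f : ℂ[X])

theorem smithE_mul_smithF : SmithE f * SmithF f = SmithF f * SmithE f + aeval (SmithH f) f := by
  have := RingQuot.mkAlgHom_rel ℂ (SmithRel.ef (f := f))
  rw [map_sub, map_mul, map_mul, ← Polynomial.aeval_algHom_apply, sub_eq_iff_eq_add'] at this
  exact this

theorem smithE_mul_smithH : SmithE f * SmithH f = (SmithH f - 1) * SmithE f := by
  have := RingQuot.mkAlgHom_rel ℂ (SmithRel.he (f := f))
  rw [map_sub, map_mul, map_mul] at this
  rw [sub_one_mul, eq_sub_iff_add_eq]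
  exact (sub_eq_iff_eq_add'.mp this).symm

theorem smithH_mul_smithF : SmithH f * SmithF f = SmithF f * (SmithH f - 1) := by
  have := RingQuot.mkAlgHom_rel ℂ (SmithRel.hf (f := f))
  rw [map_sub, map_mul, map_mul, map_neg, sub_eq_iff_eq_add'] at this
  rw [mul_sub_one]
  exact this.trans (sub_eq_add_neg _ _).symm

theorem smithH_mul_smithF_pow (a : ℕ) :
    SmithH f * SmithF f ^ a = SmithF f ^ a * (SmithH f - (a : SmithAlgebra f)) := by
  induction a with
  | zero => simp
  | succ b ih =>
    rw [pow_succ, ← mul_assoc, ih, mul_assoc, sub_mul, smithH_mul_smithF,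
      (Nat.cast_commute b (SmithF f)).eq, ← mul_sub, ← mul_assoc, ← pow_succ, sub_sub,
      add_comm 1, Nat.cast_succ]

theorem adjoin_smithE_smithF_smithH :
    Algebra.adjoin ℂ {SmithE f, SmithF f, SmithH f} = ⊤ := by
  have hgen : {SmithE f, SmithF f, SmithH f} =
      RingQuot.mkAlgHom ℂ (SmithRel f) '' Set.range (FreeAlgebra.ι ℂ) := by
    ext x
    simp only [Set.mem_insert_iff, Set.mem_singleton_iff, ← Set.range_comp, Set.mem_range]
    constructor
    · rintro (rfl | rfl | rfl)
      exacts [⟨.E, rfl⟩, ⟨.F, rfl⟩, ⟨.H, rfl⟩]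
    · rintro ⟨g, rfl⟩
      cases g
      exacts [Or.inl rfl, Or.inr (Or.inl rfl), Or.inr (Or.inr rfl)]
  rw [hgen, Algebra.adjoin_image, FreeAlgebra.adjoin_range_ι, Algebra.map_top,
    AlgHom.range_eq_top]
  exact RingQuot.mkAlgHom_surjective ℂ (SmithRel f)

end Relations

section Representation

variable (l : ℂ) (f : ℂ[X])

abbrev SmithInd : Type := ℕ →₀ ℂ[X]

/-- `E F^a = F^a E + F^(a-1) · (smithCommPoly f a)(H)`, by `E F = F E + f(H)` and
`f(H) F = F f(H - 1)`. -/
noncomputable def smithCommPoly (a : ℕ) : ℂ[X] :=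
  ∑ j ∈ Finset.range a, aeval (X - C (j : ℂ)) f

noncomputable def smithIndF : Module.End ℂ SmithInd :=
  Finsupp.lsum ℂ fun a => lsingle (a + 1)

noncomputable def smithIndH : Module.End ℂ SmithInd :=
  Finsupp.lsum ℂ fun a => lsingle a ∘ₗ LinearMap.mulLeft ℂ (X - C (a : ℂ))

noncomputable def smithIndE : Module.End ℂ SmithInd :=
  Finsupp.lsum ℂ fun a => l • (lsingle a ∘ₗ (aeval (X - 1 : ℂ[X])).toLinearMap)
    + lsingle (a - 1) ∘ₗ LinearMap.mulLeft ℂ (smithCommPoly f a)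

@[simp] theorem smithIndF_single (a : ℕ) (h : ℂ[X]) :
    smithIndF (single a h) = single (a + 1) h := by
  simp [smithIndF]

@[simp] theorem smithIndH_single (a : ℕ) (h : ℂ[X]) :
    smithIndH (single a h) = single a ((X - C (a : ℂ)) * h) := by
  simp [smithIndH]

@[simp] theorem smithIndE_single (a : ℕ) (h : ℂ[X]) :
    smithIndE l f (single a h) =
      l • single a (aeval (X - 1 : ℂ[X]) h) + single (a - 1) (smithCommPoly f a * h) := by
  simp [smithIndE]

@[simp] theorem smithCommPoly_zero : smithCommPoly f 0 = 0 := by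
  simp [smithCommPoly]

theorem smithCommPoly_succ (a : ℕ) :
    smithCommPoly f (a + 1) = smithCommPoly f a + aeval (X - C (a : ℂ)) f :=
  Finset.sum_range_succ _ _

theorem smithIndF_pow_single (n a : ℕ) (h : ℂ[X]) :
    (smithIndF ^ n) (single a h) = single (a + n) h := by
  induction n with
  | zero => simp
  | succ m ih => rw [pow_succ', Module.End.mul_apply, ih, smithIndF_single, add_assoc]

theorem aeval_smithIndH_single (p : ℂ[X]) (a : ℕ) (h : ℂ[X]) :
    aeval smithIndH p (single a h) = single a (aeval (X - C (a : ℂ)) p * h) := by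
  induction p using Polynomial.induction_on' with
  | add p q hp hq => simp [hp, hq, add_mul, single_add]
  | monomial n c =>
    have hpow : (smithIndH ^ n) (single a h) = single a ((X - C (a : ℂ)) ^ n * h) := by
      induction n with
      | zero => simp
      | succ n ih =>
        rw [pow_succ', Module.End.mul_apply, ih, smithIndH_single, ← mul_assoc, ← pow_succ']
    rw [aeval_monomial, Module.End.mul_apply, hpow, Module.algebraMap_end_apply, aeval_monomial,
      smul_single, smul_eq_C_mul, Polynomial.algebraMap_eq, ← mul_assoc]

theorem smithIndH_mul_smithIndF :
    smithIndH * smithIndF - smithIndF * smithIndH = -smithIndF := by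
  refine Finsupp.lhom_ext fun a h => ?_
  simp only [LinearMap.sub_apply, Module.End.mul_apply, LinearMap.neg_apply, smithIndF_single,
    smithIndH_single, ← single_neg, ← single_sub, Nat.cast_succ, C_add, C_1]
  ring_nf

theorem smithIndH_mul_smithIndE :
    smithIndH * smithIndE l f - smithIndE l f * smithIndH = smithIndE l f := by
  refine Finsupp.lhom_ext fun a h => ?_
  simp only [LinearMap.sub_apply, Module.End.mul_apply, smithIndE_single, smithIndH_single,
    map_add, map_mul, map_sub, aeval_X, aeval_C, smul_single]
  cases a with
  | zero =>
    simp only [Nat.zero_sub, smithCommPoly_zero, zero_mul, mul_zero, single_zero, add_zero,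
      Nat.cast_zero, map_zero, sub_zero, ← single_sub, smul_eq_C_mul, Polynomial.algebraMap_eq]
    ring_nf
  | succ b =>
    simp only [Nat.add_sub_cancel, sub_sub, add_sub_add_comm, ← single_sub, smul_eq_C_mul,
      Polynomial.algebraMap_eq, Nat.cast_succ, C_add, C_1]
    ring_nf

theorem smithIndE_mul_smithIndF :
    smithIndE l f * smithIndF - smithIndF * smithIndE l f = aeval smithIndH f := by
  refine Finsupp.lhom_ext fun a h => ?_
  simp only [LinearMap.sub_apply, Module.End.mul_apply, smithIndE_single, smithIndF_single,
    map_add, smul_single, aeval_smithIndH_single, Nat.add_sub_cancel]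
  cases a with
  | zero => simp [smithCommPoly_succ]
  | succ b =>
    rw [Nat.add_sub_cancel, add_sub_add_comm, sub_self, zero_add, ← single_sub, ← sub_mul,
      smithCommPoly_succ, add_sub_cancel_left]

noncomputable def smithRep : SmithAlgebra f →ₐ[ℂ] Module.End ℂ SmithInd :=
  RingQuot.liftAlgHom ℂ ⟨FreeAlgebra.lift ℂ fun
      | .E => smithIndE l f
      | .F => smithIndF
      | .H => smithIndH, by
    intro x y r
    induction r with
    | ef =>
      rw [← Polynomial.aeval_algHom_apply]
      simpa only [map_sub, map_mul, FreeAlgebra.lift_ι_apply] using smithIndE_mul_smithIndF l f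
    | he =>
      simpa only [map_sub, map_mul, FreeAlgebra.lift_ι_apply] using smithIndH_mul_smithIndE l f
    | hf =>
      simpa only [map_sub, map_mul, map_neg, FreeAlgebra.lift_ι_apply] using
        smithIndH_mul_smithIndF⟩

@[simp] theorem smithRep_smithE : smithRep l f (SmithE f) = smithIndE l f := by
  rw [SmithE, smithRep, RingQuot.liftAlgHom_mkAlgHom_apply, FreeAlgebra.lift_ι_apply]

@[simp] theorem smithRep_smithF : smithRep l f (SmithF f) = smithIndF := by
  rw [SmithF, smithRep, RingQuot.liftAlgHom_mkAlgHom_apply, FreeAlgebra.lift_ι_apply]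

@[simp] theorem smithRep_smithH : smithRep l f (SmithH f) = smithIndH := by
  rw [SmithH, smithRep, RingQuot.liftAlgHom_mkAlgHom_apply, FreeAlgebra.lift_ι_apply]

end Representation

section Decomposition

variable (f : ℂ[X])

noncomputable def smithPBW : SmithInd →ₗ[ℂ] SmithAlgebra f :=
  Finsupp.lsum ℂ fun a =>
    LinearMap.mulLeft ℂ (SmithF f ^ a) ∘ₗ (aeval (SmithH f)).toLinearMap

@[simp] theorem smithPBW_single (a : ℕ) (h : ℂ[X]) :
    smithPBW f (single a h) = SmithF f ^ a * aeval (SmithH f) h := by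
  simp [smithPBW]

theorem smithF_mul_smithPBW (v : SmithInd) :
    SmithF f * smithPBW f v = smithPBW f (smithIndF v) := by
  induction v using Finsupp.induction_linear with
  | zero => simp
  | add v w hv hw => rw [map_add, mul_add, hv, hw, map_add, map_add]
  | single a h => rw [smithIndF_single, smithPBW_single, smithPBW_single, ← mul_assoc, pow_succ']

theorem smithH_mul_smithPBW (v : SmithInd) :
    SmithH f * smithPBW f v = smithPBW f (smithIndH v) := by
  induction v using Finsupp.induction_linear with
  | zero => simp
  | add v w hv hw => rw [map_add, mul_add, hv, hw, map_add, map_add]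
  | single a h =>
    rw [smithIndH_single, smithPBW_single, smithPBW_single, ← mul_assoc, smithH_mul_smithF_pow,
      map_mul, map_sub, aeval_X, aeval_C, map_natCast, mul_assoc]

theorem toSubmodule_smithRFH_le_range_smithPBW :
    Subalgebra.toSubmodule (SmithRFH f) ≤ LinearMap.range (smithPBW f) := by
  refine Algebra.toSubmodule_adjoin_le_of_mul_mem ⟨single 0 1, by simp⟩ ?_
  rintro a (rfl | rfl) _ ⟨v, rfl⟩
  exacts [⟨_, (smithF_mul_smithPBW f v).symm⟩, ⟨_, (smithH_mul_smithPBW f v).symm⟩]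

noncomputable def smithOrbit (l : ℂ) : SmithAlgebra f →ₗ[ℂ] SmithInd :=
  LinearMap.applyₗ (single 0 1) ∘ₗ (smithRep l f).toLinearMap

theorem smithOrbit_apply (l : ℂ) (r : SmithAlgebra f) :
    smithOrbit f l r = smithRep l f r (single 0 1) :=
  rfl

theorem smithOrbit_smithPBW (l : ℂ) (v : SmithInd) : smithOrbit f l (smithPBW f v) = v := by
  induction v using Finsupp.induction_linear with
  | zero => simp
  | add v w hv hw => rw [map_add, map_add, hv, hw]
  | single a h =>
    rw [smithPBW_single, smithOrbit_apply, map_mul, map_pow, smithRep_smithF,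
      ← Polynomial.aeval_algHom_apply, smithRep_smithH, Module.End.mul_apply,
      aeval_smithIndH_single, smithIndF_pow_single]
    simp

theorem smithRep_apply_single_zero_one (η : SmithRE f →ₐ[ℂ] ℂ) (x : SmithRE f) :
    smithRep (η (SmithE' f)) f x (single 0 1) = η x • single 0 1 := by
  obtain ⟨p, hp⟩ := Algebra.adjoin_eq_exists_aeval ℂ (SmithE f) x
  have hx : x = aeval (SmithE' f) p := Subtype.ext (by rw [← hp, aeval_subalgebra_coe]; rfl)
  have heigen : smithIndE (η (SmithE' f)) f (single 0 1) = η (SmithE' f) • single 0 1 := by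
    simp
  rw [← hp, ← Polynomial.aeval_algHom_apply, smithRep_smithE,
    Module.End.aeval_apply_of_mem_apply_eq_smul heigen, hx, ← Polynomial.aeval_algHom_apply,
    coe_aeval_eq_eval]

theorem smithEtaIdeal_le_ker_smithOrbit (η : SmithRE f →ₐ[ℂ] ℂ) :
    SmithEtaIdeal f η ≤ LinearMap.ker (smithOrbit f (η (SmithE' f))) := by
  refine Submodule.span_le.mpr ?_
  rintro _ ⟨r, x, hx, rfl⟩
  rw [SetLike.mem_coe, LinearMap.mem_ker, smithOrbit_apply, map_mul, Module.End.mul_apply,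
    smithRep_apply_single_zero_one, hx, zero_smul, map_zero]

theorem mul_mem_smithEtaIdeal (η : SmithRE f →ₐ[ℂ] ℂ) (y : SmithAlgebra f)
    {z : SmithAlgebra f} (hz : z ∈ SmithEtaIdeal f η) : y * z ∈ SmithEtaIdeal f η := by
  induction hz using Submodule.span_induction with
  | mem _ hz =>
    obtain ⟨r, x, hx, rfl⟩ := hz
    exact Submodule.subset_span ⟨y * r, x, hx, (mul_assoc y r x).symm⟩
  | zero => simp
  | add a b _ _ ha hb => simpa only [mul_add] using add_mem ha hb
  | smul c a _ ha => simpa only [mul_smul_comm] using Submodule.smul_mem _ c ha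

theorem mul_smithE_sub_mem_smithEtaIdeal (η : SmithRE f →ₐ[ℂ] ℂ) (r : SmithAlgebra f) :
    r * (SmithE f - algebraMap ℂ _ (η (SmithE' f))) ∈ SmithEtaIdeal f η :=
  Submodule.subset_span ⟨r, SmithE' f - algebraMap ℂ _ (η (SmithE' f)),
    by rw [map_sub η, AlgHom.commutes]; exact sub_self _, rfl⟩

theorem smithE_mul_eq_of_mem_smithRFH {y : SmithAlgebra f} (hy : y ∈ SmithRFH f) :
    ∃ y₁ ∈ SmithRFH f, ∃ y₂ ∈ SmithRFH f, SmithE f * y = y₁ * SmithE f + y₂ := by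
  have hF : SmithF f ∈ SmithRFH f := Algebra.subset_adjoin (by simp)
  have hH : SmithH f ∈ SmithRFH f := Algebra.subset_adjoin (by simp)
  induction hy using Algebra.adjoin_induction with
  | mem a ha =>
    rcases ha with rfl | rfl
    · have hfH : aeval (SmithH f) f ∈ SmithRFH f :=
        Algebra.adjoin_mono (by simp) (aeval_mem_adjoin_singleton ℂ (SmithH f))
      exact ⟨_, hF, _, hfH, smithE_mul_smithF f⟩
    · exact ⟨_, sub_mem hH (one_mem _), 0, zero_mem _, by rw [add_zero, smithE_mul_smithH]⟩
  | algebraMap c =>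
    exact ⟨_, algebraMap_mem _ c, 0, zero_mem _, by rw [add_zero, Algebra.commutes]⟩
  | add a b _ _ ha hb =>
    obtain ⟨a₁, ha₁, a₂, ha₂, hae⟩ := ha
    obtain ⟨b₁, hb₁, b₂, hb₂, hbe⟩ := hb
    refine ⟨a₁ + b₁, add_mem ha₁ hb₁, a₂ + b₂, add_mem ha₂ hb₂, ?_⟩
    rw [mul_add, hae, hbe]
    noncomm_ring
  | mul a b _ hb' ha hb =>
    obtain ⟨a₁, ha₁, a₂, ha₂, hae⟩ := ha
    obtain ⟨b₁, hb₁, b₂, hb₂, hbe⟩ := hb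
    refine ⟨a₁ * b₁, mul_mem ha₁ hb₁, a₁ * b₂ + a₂ * b,
      add_mem (mul_mem ha₁ hb₂) (mul_mem ha₂ hb'), ?_⟩
    rw [← mul_assoc, hae, add_mul, mul_assoc, hbe]
    noncomm_ring

theorem smithRFH_sup_smithEtaIdeal (η : SmithRE f →ₐ[ℂ] ℂ) :
    Subalgebra.toSubmodule (SmithRFH f) ⊔ SmithEtaIdeal f η = ⊤ := by
  rw [eq_top_iff, ← Algebra.top_toSubmodule, ← adjoin_smithE_smithF_smithH f]
  refine Algebra.toSubmodule_adjoin_le_of_mul_mem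
    (Submodule.mem_sup_left (one_mem (SmithRFH f))) ?_
  rintro a ha _ hm
  obtain ⟨y, hy : y ∈ SmithRFH f, z, hz, rfl⟩ := Submodule.mem_sup.mp hm
  rw [mul_add]
  refine add_mem ?_ (Submodule.mem_sup_right (mul_mem_smithEtaIdeal f η a hz))
  rcases ha with rfl | rfl | rfl
  · obtain ⟨y₁, hy₁, y₂, hy₂, he⟩ := smithE_mul_eq_of_mem_smithRFH f hy
    have hsplit : y₁ * SmithE f + y₂ =
        (algebraMap ℂ _ (η (SmithE' f)) * y₁ + y₂)
          + y₁ * (SmithE f - algebraMap ℂ _ (η (SmithE' f))) := by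
      rw [Algebra.commutes, mul_sub]
      abel
    rw [he, hsplit]
    exact Submodule.add_mem_sup
      (show _ ∈ SmithRFH f from add_mem (mul_mem (algebraMap_mem _ _) hy₁) hy₂)
      (mul_smithE_sub_mem_smithEtaIdeal f η y₁)
  all_goals
    exact Submodule.mem_sup_left
      (show _ ∈ SmithRFH f from mul_mem (Algebra.subset_adjoin (by simp)) hy)

end Decomposition

theorem smith_decomposition_general (f : ℂ[X]) (η : SmithRE f →ₐ[ℂ] ℂ) :
    IsCompl (Subalgebra.toSubmodule (SmithRFH f)) (SmithEtaIdeal f η) := by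
  refine ⟨Submodule.disjoint_def.mpr fun x hx hxI => ?_,
    codisjoint_iff.mpr (smithRFH_sup_smithEtaIdeal f η)⟩
  obtain ⟨v, rfl⟩ := toSubmodule_smithRFH_le_range_smithPBW f hx
  have hv : smithOrbit f (η (SmithE' f)) (smithPBW f v) = 0 :=
    smithEtaIdeal_le_ker_smithOrbit f η hxI
  rw [smithOrbit_smithPBW] at hv
  rw [hv, map_zero]

/-- For a nonsingular character `η` of `R(E)`, one has the vector space direct sum
decomposition `R(f) = R(F,H) ⊕ R(f)·R_η(E)`. -/
theorem smith_decomposition (f : ℂ[X]) (η : SmithRE f →ₐ[ℂ] ℂ) (hη : η (SmithE' f) ≠ 0) :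
    IsCompl (Subalgebra.toSubmodule (SmithRFH f)) (SmithEtaIdeal f η) :=
  smith_decomposition_general f η
end

section
/- Let π: R(f) → R(F,H) be the projection corresponding to the decomposition R(f) = R(F,H) ⊕ R(f)·R_η(E), written u ↦ u^η. Then for u, v in the center Z(R), one has (uv)^η = u^η v^η. -/
open Polynomial

/-- For central `u, v` with `R(F,H)`-components `u^η, v^η` (relative to the decomposition
`R(f) = R(F,H) ⊕ R(f)·R_η(E)`), the component of `uv` is `u^η·v^η`. -/
theorem smith_proj_multiplicative_on_center (f : ℂ[X]) (η : SmithRE f →ₐ[ℂ] ℂ)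
    (hη : η (SmithE' f) ≠ 0) (u v u' v' : SmithAlgebra f)
    (hu : u ∈ Subalgebra.center ℂ (SmithAlgebra f))
    (hv : v ∈ Subalgebra.center ℂ (SmithAlgebra f))
    (hu' : u' ∈ SmithRFH f) (hv' : v' ∈ SmithRFH f)
    (hdu : u - u' ∈ SmithEtaIdeal f η) (hdv : v - v' ∈ SmithEtaIdeal f η) :
    u * v - u' * v' ∈ SmithEtaIdeal f η := by
  have left_mul : ∀ (a : SmithAlgebra f) {y : SmithAlgebra f},
      y ∈ SmithEtaIdeal f η → a * y ∈ SmithEtaIdeal f η := by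
    intro a y hy
    induction hy using Submodule.span_induction with
    | mem z hz =>
      obtain ⟨r, x, hx, rfl⟩ := hz
      exact Submodule.subset_span ⟨a * r, x, hx, (mul_assoc _ _ _).symm⟩
    | zero => simpa using (SmithEtaIdeal f η).zero_mem
    | add y z _ _ hy1 hz1 => rw [mul_add]; exact add_mem hy1 hz1
    | smul c y _ hy1 => rw [mul_smul_comm]; exact Submodule.smul_mem _ c hy1
  have key : u * v - u' * v' = v * (u - u') + u' * (v - v') := by
    rw [mul_sub, mul_sub, Subalgebra.mem_center_iff.mp hu v,
      Subalgebra.mem_center_iff.mp hv u']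
    noncomm_ring
  rw [key]
  exact add_mem (left_mul v hdu) (left_mul u' hdv)
end

section
/- Multiplication induces an isomorphism of right W(F,H)-modules ℂ[H] ⊗ W(F,H) → R(F,H); in particular, R(F,H) is a free right module over W(F,H) with basis {H^p : p ≥ 0}. -/
open Polynomial

/-- `Ω^η = 2η(E)F + u(H+1)`, the image of the Casimir element under the projection `π`. -/
noncomputable def SmithOmegaEta (f u : ℂ[X]) (η : SmithRE f →ₐ[ℂ] ℂ) : SmithAlgebra f :=
  algebraMap ℂ (SmithAlgebra f) (2 * η (SmithE' f)) * SmithF f +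
    aeval (SmithH f) (u.comp (X + 1))

/-- `W(F,H)`, the image of the center under `π`, i.e. the subalgebra generated by `Ω^η`. -/
noncomputable def SmithW (f u : ℂ[X]) (η : SmithRE f →ₐ[ℂ] ℂ) : Subalgebra ℂ (SmithAlgebra f) :=
  Algebra.adjoin ℂ {SmithOmegaEta f u η}


/-!
Since `F H = (H + 1) F`, the element `Ω = 2η(E) F + u(H + 1)` satisfies
`Ω H = (H + 1) Ω - u(H + 1)`, so the span of the ordered monomials `H^p Ω^q` is stable under
left multiplication by `H` and `Ω`; as `η(E) ≠ 0`, `H` and `Ω` generate `R(F,H)`, hence this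
span is `R(F,H)`. For linear independence let `R(f)` act on `ℂ[t][x] ≅ R(f)/R(f)E`: there `H`
is multiplication by `t` and `Ω^q · 1` has `x`-degree exactly `q`, so the vectors
`H^p Ω^q · 1 = t^p · Ω^q · 1` are linearly independent over `ℂ`.
-/
section Semiring

open Submodule

variable {R A : Type*} [CommSemiring R] [Semiring A] [Algebra R A]

def Submodule.leftStabilizer (T : Submodule R A) : Subalgebra R A where
  carrier := {a | ∀ t ∈ T, a * t ∈ T}
  mul_mem' {a b} ha hb t ht := by rw [mul_assoc]; exact ha _ (hb t ht)
  add_mem' ha hb t ht := by rw [add_mul]; exact T.add_mem (ha t ht) (hb t ht)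
  algebraMap_mem' r t ht := by
    rw [Algebra.algebraMap_eq_smul_one, smul_mul_assoc, one_mul]; exact T.smul_mem r ht

theorem Submodule.mem_leftStabilizer_span {s : Set A} {a : A} :
    a ∈ (span R s).leftStabilizer ↔ ∀ t ∈ s, a * t ∈ span R s := by
  refine ⟨fun h t ht => h t (subset_span ht), fun h t ht => ?_⟩
  induction ht using span_induction with
  | mem t ht => exact h t ht
  | zero => simp
  | add t t' _ _ ht ht' => rw [mul_add]; exact add_mem ht ht'
  | smul r t _ ht => rw [mul_smul_comm]; exact smul_mem _ r ht

theorem Algebra.adjoin_toSubmodule_le_of_subset_leftStabilizer {s : Set A} {T : Submodule R A}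
    (h1 : 1 ∈ T) (hs : s ⊆ T.leftStabilizer) : Subalgebra.toSubmodule (Algebra.adjoin R s) ≤ T :=
  fun a ha => by simpa using Algebra.adjoin_le hs ha 1 h1

def orderedMonomial (x y : A) (pq : ℕ × ℕ) : A := x ^ pq.1 * y ^ pq.2

theorem span_orderedMonomial_eq_adjoin {x y a b : A} (ha : a ∈ Algebra.adjoin R {x})
    (hb : b ∈ Algebra.adjoin R {x}) (hyx : y * x = a * y + b) :
    span R (Set.range (orderedMonomial x y)) =
      Subalgebra.toSubmodule (Algebra.adjoin R {x, y}) := by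
  set T := span R (Set.range (orderedMonomial x y))
  have hmem (p q : ℕ) : x ^ p * y ^ q ∈ T := subset_span ⟨(p, q), rfl⟩
  have hx : x ∈ T.leftStabilizer := mem_leftStabilizer_span.2 <| by
    rintro _ ⟨⟨p, q⟩, rfl⟩
    simpa [orderedMonomial, ← mul_assoc, ← pow_succ'] using hmem (p + 1) q
  have hxT : Algebra.adjoin R {x} ≤ T.leftStabilizer := Algebra.adjoin_le (by simpa using hx)
  have hy : y ∈ T.leftStabilizer := mem_leftStabilizer_span.2 <| by
    rintro _ ⟨⟨p, q⟩, rfl⟩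
    induction p with
    | zero => simpa [orderedMonomial, ← pow_succ'] using hmem 0 (q + 1)
    | succ p ih =>
      have : y * orderedMonomial x y (p + 1, q) =
          a * (y * orderedMonomial x y (p, q)) + b * orderedMonomial x y (p, q) := by
        simp only [orderedMonomial, pow_succ', ← mul_assoc, hyx, add_mul]
      rw [this]
      exact add_mem (hxT ha _ ih) (hxT hb _ (hmem p q))
  refine le_antisymm (span_le.2 ?_) 
    (Algebra.adjoin_toSubmodule_le_of_subset_leftStabilizer (by simpa using hmem 0 0) ?_)
  · rintro _ ⟨⟨p, q⟩, rfl⟩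
    show _ ∈ Algebra.adjoin R {x, y}
    exact mul_mem (pow_mem (Algebra.subset_adjoin (by simp)) p)
      (pow_mem (Algebra.subset_adjoin (by simp)) q)
  · simp [Set.insert_subset_iff, hx, hy]

noncomputable def sumPowMul (x : A) (S : Subalgebra R A) : (ℕ →₀ S) →ₗ[R] A :=
  Finsupp.lsum R fun p => LinearMap.mulLeft R (x ^ p) ∘ₗ S.val.toLinearMap

theorem coe_sumPowMul (x : A) (S : Subalgebra R A) :
    ⇑(sumPowMul x S) = fun c => c.sum fun p a => x ^ p * (a : A) := rfl

theorem range_sumPowMul_adjoin (x y : A) :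
    LinearMap.range (sumPowMul x (Algebra.adjoin R {y})) =
      span R (Set.range (orderedMonomial x y)) := by
  refine le_antisymm ?_ (span_le.2 ?_)
  · rintro _ ⟨c, rfl⟩
    refine sum_mem fun p _ => ?_
    have hc : (c p : A) ∈ (aeval (R := R) y).range := by
      rw [← Algebra.adjoin_singleton_eq_range_aeval]; exact (c p).2
    obtain ⟨g, hg⟩ := hc
    show x ^ p * (c p : A) ∈ _
    rw [← hg, AlgHom.toRingHom_eq_coe, RingHom.coe_coe, aeval_eq_sum_range, Finset.mul_sum]
    exact sum_mem fun q _ => by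
      rw [mul_smul_comm]; exact smul_mem _ _ (subset_span ⟨(p, q), rfl⟩)
  · rintro _ ⟨⟨p, q⟩, rfl⟩
    refine ⟨Finsupp.single p ⟨y ^ q, pow_mem (Algebra.self_mem_adjoin_singleton R y) q⟩, ?_⟩
    simp [coe_sumPowMul, orderedMonomial]

end Semiring

section Ring

variable {R A : Type*} [CommRing R] [Ring A] [Algebra R A]

theorem injective_sumPowMul_adjoin {x y : A} (h : LinearIndependent R (orderedMonomial x y)) :
    Function.Injective (sumPowMul x (Algebra.adjoin R {y})) := by
  classical
  rw [← LinearMap.ker_eq_bot, LinearMap.ker_eq_bot']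
  intro c hc
  have hrange (p : ℕ) : ∃ g : R[X], aeval y g = c p := by
    rw [← AlgHom.mem_range, ← Algebra.adjoin_singleton_eq_range_aeval]; exact (c p).2
  choose g hg using hrange
  obtain ⟨N, hN⟩ : ∃ N, ∀ p ∈ c.support, (g p).natDegree < N :=
    ⟨c.support.sup (fun p => (g p).natDegree) + 1,
      fun p hp => Nat.lt_succ_of_le (Finset.le_sup (f := fun p => (g p).natDegree) hp)⟩
  have hsum : ∑ pq ∈ c.support ×ˢ Finset.range N,
      (g pq.1).coeff pq.2 • orderedMonomial x y pq = 0 := by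
    rw [← hc, coe_sumPowMul, Finset.sum_product]
    beta_reduce
    rw [Finsupp.sum]
    refine Finset.sum_congr rfl fun p hp => ?_
    simp only [orderedMonomial, ← hg, aeval_eq_sum_range' (hN p hp), Finset.mul_sum,
      mul_smul_comm]
  have hcoeff := linearIndependent_iff'.1 h _ _ hsum
  ext p
  by_cases hp : p ∈ c.support
  · have : g p = 0 := Polynomial.ext fun q => by
      by_cases hq : q < N
      · exact hcoeff (p, q) (Finset.mem_product.2 ⟨hp, Finset.mem_range.2 hq⟩)
      · exact coeff_eq_zero_of_natDegree_lt (by have := hN p hp; omega)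
    simp [← hg, this]
  · simpa using hp

theorem adjoin_pair_smul_add_aeval {x z : A} {c : R} (hc : IsUnit c) (g : R[X]) :
    Algebra.adjoin R {x, c • z + aeval x g} = Algebra.adjoin R {z, x} := by
  obtain ⟨c, rfl⟩ := hc
  have hg : aeval x g ∈ Algebra.adjoin R {x} := aeval_mem_adjoin_singleton R x
  apply le_antisymm <;> rw [Algebra.adjoin_le_iff, Set.insert_subset_iff, Set.singleton_subset_iff]
  · refine ⟨Algebra.subset_adjoin (by simp), add_mem (Subalgebra.smul_mem _
      (Algebra.subset_adjoin (by simp)) _) (Algebra.adjoin_mono (by simp) hg)⟩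
  · refine ⟨?_, Algebra.subset_adjoin (by simp)⟩
    have hz : c⁻¹ • (((c : R) • z + aeval x g) - aeval x g) ∈
        Algebra.adjoin R {x, (c : R) • z + aeval x g} :=
      Subalgebra.smul_mem _ (sub_mem (Algebra.subset_adjoin (by simp))
        (Algebra.adjoin_mono (by simp) hg)) _
    rwa [add_sub_cancel_right, ← Units.smul_def, inv_smul_smul] at hz

end Ring

/- `x^n a(t) ∈ ℂ[X][X]` stands for the class of `a(H) F^n` modulo `R(f)E`. Since
`F a(H) = a(H + 1) F` and `E F^n ≡ weight f n (H) F^(n-1)`, the generators act as below. -/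
namespace SmithVerma

noncomputable def weight (f : ℂ[X]) : ℕ → ℂ[X]
  | 0 => 0
  | n + 1 => f + taylor 1 (weight f n)

noncomputable def opH : Module.End ℂ ℂ[X][X] := Algebra.lsmul ℂ ℂ ℂ[X][X] (X : ℂ[X])

noncomputable def opF : Module.End ℂ ℂ[X][X] :=
  LinearMap.mulLeft ℂ (X : ℂ[X][X]) ∘ₗ (mapAlgHom (taylorAlgHom (1 : ℂ))).toLinearMap

noncomputable def opE (f : ℂ[X]) : Module.End ℂ ℂ[X][X] :=
  lsum (R := ℂ) fun n => (monomial (n - 1)).restrictScalars ℂ ∘ₗ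
    LinearMap.mulLeft ℂ (weight f n) ∘ₗ taylor (-1)

theorem ext_monomial {φ ψ : Module.End ℂ ℂ[X][X]}
    (h : ∀ n a, φ (monomial n a) = ψ (monomial n a)) : φ = ψ :=
  LinearMap.toAddMonoidHom_injective (addHom_ext h)

theorem opH_monomial (n : ℕ) (a : ℂ[X]) : opH (monomial n a) = monomial n (X * a) := by
  rw [opH, Algebra.lsmul_apply, smul_monomial, smul_eq_mul]

theorem opF_monomial (n : ℕ) (a : ℂ[X]) : opF (monomial n a) = monomial (n + 1) (taylor 1 a) := by
  simp [opF, X_mul_monomial]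

theorem opE_monomial (f : ℂ[X]) (n : ℕ) (a : ℂ[X]) :
    opE f (monomial n a) = monomial (n - 1) (weight f n * taylor (-1) a) := by
  simp [opE, lsum_apply]

theorem aeval_opH (g : ℂ[X]) : aeval opH g = Algebra.lsmul ℂ ℂ ℂ[X][X] g := by
  rw [opH, aeval_algHom_apply, aeval_X_left_apply]

theorem opE_mul_opF_sub (f : ℂ[X]) : opE f * opF - opF * opE f = aeval opH f := by
  refine ext_monomial fun n a => ?_
  simp only [aeval_opH, LinearMap.sub_apply, Module.End.mul_apply, opE_monomial, opF_monomial,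
    Algebra.lsmul_apply, smul_monomial, smul_eq_mul]
  cases n with
  | zero => simp [weight, taylor_taylor]
  | succ n =>
    rw [Nat.add_sub_cancel, Nat.sub_add_cancel n.succ_pos, ← map_sub]
    congr 1
    simp only [weight, map_add, taylor_mul, taylor_taylor, neg_add_cancel, add_neg_cancel,
      taylor_zero', LinearMap.id_coe, id_eq]
    ring

theorem opH_mul_opE_sub (f : ℂ[X]) : opH * opE f - opE f * opH = opE f := by
  refine ext_monomial fun n a => ?_
  simp only [LinearMap.sub_apply, Module.End.mul_apply, opE_monomial, opH_monomial, ← map_sub,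
    taylor_mul, taylor_X]
  congr 1
  simp only [map_neg, map_one]
  ring

theorem opH_mul_opF_sub : opH * opF - opF * opH = -opF := by
  refine ext_monomial fun n a => ?_
  simp only [LinearMap.sub_apply, LinearMap.neg_apply, Module.End.mul_apply, opF_monomial,
    opH_monomial, ← map_sub, ← map_neg, taylor_mul, taylor_X]
  congr 1
  simp only [map_neg, map_one]
  ring

theorem degree_opF (P : ℂ[X][X]) : (opF P).degree = P.degree + 1 := by
  have : Function.Injective ((taylorAlgHom (1 : ℂ) : ℂ[X] →+* ℂ[X])) := taylor_injective 1
  simp [opF, X_mul, degree_map_eq_of_injective this]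

noncomputable def opOmega (c : ℂ) (g : ℂ[X]) : Module.End ℂ ℂ[X][X] :=
  c • opF + Algebra.lsmul ℂ ℂ ℂ[X][X] g

theorem degree_opOmega_pow_apply_one {c : ℂ} (hc : c ≠ 0) (g : ℂ[X]) (q : ℕ) :
    ((opOmega c g ^ q) 1).degree = q := by
  induction q with
  | zero => simp
  | succ q ih =>
    rw [pow_succ', Module.End.mul_apply, opOmega, LinearMap.add_apply, LinearMap.smul_apply,
      Algebra.lsmul_apply, ← opOmega]
    have hlt : (g • (opOmega c g ^ q) 1).degree < q + 1 :=
      (degree_smul_le _ _).trans_lt (by rw [ih]; exact_mod_cast q.lt_succ_self)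
    rw [degree_add_eq_left_of_degree_lt] <;>
      rw [degree_smul_of_smul_regular _ (IsSMulRegular.of_ne_zero hc), degree_opF, ih]
    · norm_cast
    · exact hlt

open SmithGen in
noncomputable def generatorAction (f : ℂ[X]) : SmithGen → Module.End ℂ ℂ[X][X]
  | E => opE f
  | F => opF
  | H => opH

theorem generatorAction_rel (f : ℂ[X]) ⦃a b : FreeAlgebra ℂ SmithGen⦄ (h : SmithRel f a b) :
    FreeAlgebra.lift ℂ (generatorAction f) a = FreeAlgebra.lift ℂ (generatorAction f) b := by
  cases h with
  | ef => simpa [generatorAction, ← aeval_algHom_apply] using opE_mul_opF_sub f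
  | he => simpa [generatorAction] using opH_mul_opE_sub f
  | hf => simpa [generatorAction] using opH_mul_opF_sub

noncomputable def rep (f : ℂ[X]) : SmithAlgebra f →ₐ[ℂ] Module.End ℂ ℂ[X][X] :=
  RingQuot.liftAlgHom ℂ ⟨FreeAlgebra.lift ℂ (generatorAction f), generatorAction_rel f⟩

theorem rep_SmithH (f : ℂ[X]) : rep f (SmithH f) = opH := by
  simp [rep, SmithH, generatorAction]

theorem rep_SmithF (f : ℂ[X]) : rep f (SmithF f) = opF := by
  simp [rep, SmithF, generatorAction]

theorem rep_SmithOmegaEta (f u : ℂ[X]) (η : SmithRE f →ₐ[ℂ] ℂ) :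
    rep f (SmithOmegaEta f u η) = opOmega (2 * η (SmithE' f)) (u.comp (X + 1)) := by
  rw [SmithOmegaEta, map_add, map_mul, AlgHom.commutes, ← aeval_algHom_apply, rep_SmithH,
    rep_SmithF, aeval_opH, ← Algebra.smul_def, opOmega]

end SmithVerma

open SmithVerma in
theorem linearIndependent_orderedMonomial_SmithH_SmithOmegaEta (f u : ℂ[X])
    (η : SmithRE f →ₐ[ℂ] ℂ) (hη : η (SmithE' f) ≠ 0) :
    LinearIndependent ℂ (orderedMonomial (SmithH f) (SmithOmegaEta f u η)) := by
  let w : Polynomial.Sequence ℂ[X] := ⟨fun q => (opOmega (2 * η (SmithE' f)) (u.comp (X + 1)) ^ q) 1,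
    degree_opOmega_pow_apply_one (mul_ne_zero two_ne_zero hη) _⟩
  refine LinearIndependent.of_comp (LinearMap.applyₗ (1 : ℂ[X][X]) ∘ₗ (rep f).toLinearMap) ?_
  convert linearIndependent_smul (basisMonomials ℂ).linearIndependent w.linearIndependent
    using 1
  funext ⟨p, q⟩
  simp only [Function.comp_apply, LinearMap.comp_apply, LinearMap.applyₗ_apply_apply,
    AlgHom.toLinearMap_apply, orderedMonomial, map_mul, map_pow, rep_SmithH, rep_SmithOmegaEta,
    Module.End.mul_apply, coe_basisMonomials, monomial_one_right_eq_X_pow]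
  rw [opH, ← map_pow, Algebra.lsmul_apply]

theorem SmithF_mul_SmithH (f : ℂ[X]) : SmithF f * SmithH f = (SmithH f + 1) * SmithF f := by
  have h : SmithH f * SmithF f - SmithF f * SmithH f = -SmithF f := by
    simpa only [SmithH, SmithF, map_sub, map_mul, map_neg] using
      RingQuot.mkAlgHom_rel ℂ (SmithRel.hf (f := f))
  rw [sub_eq_iff_eq_add] at h
  rw [add_mul, one_mul, h]
  abel

theorem SmithOmegaEta_mul_SmithH (f u : ℂ[X]) (η : SmithRE f →ₐ[ℂ] ℂ) :
    SmithOmegaEta f u η * SmithH f =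
      (SmithH f + 1) * SmithOmegaEta f u η + -aeval (SmithH f) (u.comp (X + 1)) := by
  have hU := commute_X (u.comp (X + 1)) |>.map (aeval (SmithH f))
  rw [aeval_X] at hU
  rw [SmithOmegaEta, add_mul, mul_assoc, SmithF_mul_SmithH, ← hU.eq, mul_add, Algebra.left_comm]
  simp only [add_one_mul]
  abel

theorem smith_RFH_free_over_W_general (f u : ℂ[X])
    (η : SmithRE f →ₐ[ℂ] ℂ) (hη : η (SmithE' f) ≠ 0) :
    Function.Injective (fun c : ℕ →₀ SmithW f u η =>
        c.sum fun p a => SmithH f ^ p * (a : SmithAlgebra f)) ∧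
    Set.range (fun c : ℕ →₀ SmithW f u η =>
        c.sum fun p a => SmithH f ^ p * (a : SmithAlgebra f)) = (SmithRFH f : Set (SmithAlgebra f)) := by
  unfold SmithW
  have hshift : SmithH f + 1 ∈ Algebra.adjoin ℂ {SmithH f} :=
    add_mem (Algebra.self_mem_adjoin_singleton ℂ _) (one_mem _)
  have hU : -aeval (SmithH f) (u.comp (X + 1)) ∈ Algebra.adjoin ℂ {SmithH f} :=
    neg_mem (aeval_mem_adjoin_singleton ℂ _)
  rw [← coe_sumPowMul, ← LinearMap.coe_range, range_sumPowMul_adjoin,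
    span_orderedMonomial_eq_adjoin hshift hU (SmithOmegaEta_mul_SmithH f u η)]
  refine ⟨injective_sumPowMul_adjoin
    (linearIndependent_orderedMonomial_SmithH_SmithOmegaEta f u η hη), ?_⟩
  rw [SmithOmegaEta, ← Algebra.smul_def,
    adjoin_pair_smul_add_aeval (mul_ne_zero two_ne_zero hη).isUnit]
  rfl

/-- Multiplication induces an isomorphism `ℂ[H] ⊗ W(F,H) ≅ R(F,H)` of right
`W(F,H)`-modules: `R(F,H)` is free as a right `W(F,H)`-module with basis `{H^p : p ≥ 0}`. -/
theorem smith_RFH_free_over_W (f u : ℂ[X])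
    (hu : f = C (1/2 : ℂ) * (u.comp (X + 1) - u))
    (η : SmithRE f →ₐ[ℂ] ℂ) (hη : η (SmithE' f) ≠ 0) :
    Function.Injective (fun c : ℕ →₀ SmithW f u η =>
        c.sum fun p a => SmithH f ^ p * (a : SmithAlgebra f)) ∧
    Set.range (fun c : ℕ →₀ SmithW f u η =>
        c.sum fun p a => SmithH f ^ p * (a : SmithAlgebra f)) = (SmithRFH f : Set (SmithAlgebra f)) :=
  smith_RFH_free_over_W_general f u η hη
end

section
/- For x ∈ R(E), u ∈ R(F,H), and v ∈ W(F,H), the η-reduced action satisfies x • (uv) = (x • u)·v; i.e., the reduced action is W(F,H)-linear on the right. -/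
open Polynomial

/-
Let `I = R(f)·ker η`, a left ideal. Since `E - η(E) ∈ ker η`, the commutation rules
`EF = FE + f(H)` and `EH = (H - 1)E` show that `R(F,H) + I` is stable under left multiplication by
`E`, `F` and `H`, hence equals `R(f)`; therefore `r - π r ∈ I` for every `r`. For `z` central,
`r·π z ≡ r z = z r ≡ z·π r = π r·z ≡ π r·π z` modulo the left ideal `I`, and `π r·π z ∈ R(F,H)`
is fixed by `π`, so `π (r·π z) = π r·π z`. Take `r = xu`.
-/

section Projection

variable {R A : Type*} [CommRing R] [Ring A] [Algebra R A]
  {B : Subalgebra R A} {I : Submodule R A} {π : A →ₗ[R] A}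

theorem sub_map_mem_of_mem_sup (hid : ∀ a ∈ B, π a = a) (hker : ∀ k ∈ I, π k = 0) {r : A}
    (hr : r ∈ Subalgebra.toSubmodule B ⊔ I) : r - π r ∈ I := by
  obtain ⟨a, ha, k, hk, rfl⟩ := Submodule.mem_sup.mp hr
  rwa [map_add, hid a ha, hker k hk, add_zero, add_sub_cancel_left]

theorem map_mul_map_of_mem_center (hrange : ∀ r, π r ∈ B) (hid : ∀ a ∈ B, π a = a)
    (hker : ∀ k ∈ I, π k = 0) (hI : ∀ r, ∀ k ∈ I, r * k ∈ I) (hproj : ∀ r, r - π r ∈ I)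
    {z : A} (hz : z ∈ Subalgebra.center R A) (r : A) :
    π (r * π z) = π r * π z := by
  have hcomm : ∀ g, g * z = z * g := Subalgebra.mem_center_iff.mp hz
  have hdiff : r * π z - π r * π z
      = z * (r - π r) + π r * (z - π z) - r * (z - π z) := by
    rw [mul_sub, mul_sub, mul_sub, ← hcomm r, ← hcomm (π r)]
    noncomm_ring
  have hmem : r * π z - π r * π z ∈ I := by
    rw [hdiff]
    exact sub_mem (add_mem (hI _ _ (hproj r)) (hI _ _ (hproj z))) (hI _ _ (hproj z))
  have h0 := hker _ hmem
  rw [map_sub, sub_eq_zero] at h0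
  rw [h0, hid _ (mul_mem (hrange r) (hrange z))]

end Projection

theorem Submodule.eq_top_of_one_mem_of_mul_mem {R A : Type*} [CommSemiring R] [Semiring A]
    [Algebra R A] {s : Set A} (hs : Algebra.adjoin R s = ⊤) {S : Submodule R A} (h1 : 1 ∈ S)
    (hmul : ∀ g ∈ s, ∀ x ∈ S, g * x ∈ S) : S = ⊤ := by
  refine eq_top_iff'.mpr fun r => ?_
  suffices ∀ x ∈ S, r * x ∈ S by simpa using this 1 h1
  have hr : r ∈ Algebra.adjoin R s := hs ▸ Algebra.mem_top
  induction hr using Algebra.adjoin_induction with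
  | mem g hg => exact hmul g hg
  | algebraMap c =>
    intro x hx
    rw [← Algebra.smul_def]
    exact S.smul_mem c hx
  | add g₁ g₂ _ _ ih₁ ih₂ =>
    intro x hx
    rw [add_mul]
    exact add_mem (ih₁ x hx) (ih₂ x hx)
  | mul g₁ g₂ _ _ ih₁ ih₂ =>
    intro x hx
    rw [mul_assoc]
    exact ih₁ _ (ih₂ x hx)

namespace SmithAlgebra

variable (f : ℂ[X])

theorem adjoin_E_F_H : Algebra.adjoin ℂ {SmithE f, SmithF f, SmithH f} = ⊤ := by
  have hrange : (RingQuot.mkAlgHom ℂ (SmithRel f)).range = ⊤ :=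
    (AlgHom.range_eq_top _).mpr (RingQuot.mkAlgHom_surjective ℂ (SmithRel f))
  rw [eq_top_iff, ← hrange, ← Algebra.map_top, ← FreeAlgebra.adjoin_range_ι, AlgHom.map_adjoin]
  apply Algebra.adjoin_mono
  rintro _ ⟨_, ⟨g, rfl⟩, rfl⟩
  cases g with
  | E => exact Or.inl rfl
  | F => exact Or.inr (Or.inl rfl)
  | H => exact Or.inr (Or.inr rfl)

theorem E_mul_F : SmithE f * SmithF f = SmithF f * SmithE f + aeval (SmithH f) f := by
  have h := RingQuot.mkAlgHom_rel ℂ (SmithRel.ef (f := f))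
  rw [map_sub, map_mul, map_mul, ← aeval_algHom_apply] at h
  exact eq_add_of_sub_eq' h

theorem E_mul_H : SmithE f * SmithH f = (SmithH f - 1) * SmithE f := by
  have h := RingQuot.mkAlgHom_rel ℂ (SmithRel.he (f := f))
  rw [map_sub, map_mul, map_mul] at h
  change SmithH f * SmithE f - SmithE f * SmithH f = SmithE f at h
  rw [sub_mul, one_mul, eq_sub_iff_add_eq, sub_eq_iff_eq_add'.mp h]

theorem F_mem_RFH : SmithF f ∈ SmithRFH f := Algebra.subset_adjoin (Or.inl rfl)

theorem H_mem_RFH : SmithH f ∈ SmithRFH f := Algebra.subset_adjoin (Or.inr rfl)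

theorem E_mul_mem_RFH {w : SmithAlgebra f} (hw : w ∈ SmithRFH f) :
    ∃ a ∈ SmithRFH f, ∃ b ∈ SmithRFH f, SmithE f * w = a + b * SmithE f := by
  induction hw using Algebra.adjoin_induction with
  | mem g hg =>
    rcases hg with rfl | rfl
    · have hfH : aeval (SmithH f) f ∈ SmithRFH f :=
        Algebra.adjoin_mono (by simp) (aeval_mem_adjoin_singleton ℂ (SmithH f))
      exact ⟨_, hfH, _, F_mem_RFH f, by rw [E_mul_F, add_comm]⟩
    · exact ⟨0, zero_mem _, _, sub_mem (H_mem_RFH f) (one_mem _), by rw [E_mul_H, zero_add]⟩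
  | algebraMap c =>
    exact ⟨0, zero_mem _, _, algebraMap_mem _ c, by rw [zero_add, Algebra.commutes]⟩
  | add w₁ w₂ _ _ ih₁ ih₂ =>
    obtain ⟨a₁, ha₁, b₁, hb₁, h₁⟩ := ih₁
    obtain ⟨a₂, ha₂, b₂, hb₂, h₂⟩ := ih₂
    exact ⟨a₁ + a₂, add_mem ha₁ ha₂, b₁ + b₂, add_mem hb₁ hb₂,
      by rw [mul_add, h₁, h₂]; noncomm_ring⟩
  | mul w₁ w₂ _ hw₂ ih₁ ih₂ =>
    obtain ⟨a₁, ha₁, b₁, hb₁, h₁⟩ := ih₁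
    obtain ⟨a₂, ha₂, b₂, hb₂, h₂⟩ := ih₂
    refine ⟨a₁ * w₂ + b₁ * a₂, add_mem (mul_mem ha₁ hw₂) (mul_mem hb₁ ha₂),
      b₁ * b₂, mul_mem hb₁ hb₂, ?_⟩
    rw [← mul_assoc, h₁, add_mul, mul_assoc b₁, h₂]
    noncomm_ring

variable (η : SmithRE f →ₐ[ℂ] ℂ)

theorem mul_mem_etaIdeal (r : SmithAlgebra f) {k : SmithAlgebra f}
    (hk : k ∈ SmithEtaIdeal f η) : r * k ∈ SmithEtaIdeal f η := by
  induction hk using Submodule.span_induction with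
  | mem z hz =>
    obtain ⟨r', x, hx, rfl⟩ := hz
    exact Submodule.subset_span ⟨r * r', x, hx, (mul_assoc r r' _).symm⟩
  | zero => simp
  | add x y _ _ ihx ihy => simpa [mul_add] using add_mem ihx ihy
  | smul c x _ ih => simpa [mul_smul_comm] using Submodule.smul_mem _ c ih

theorem mul_E_mem_sup {b : SmithAlgebra f} (hb : b ∈ SmithRFH f) :
    b * SmithE f ∈ Subalgebra.toSubmodule (SmithRFH f) ⊔ SmithEtaIdeal f η := by
  set c := η (SmithE' f)
  have hker : η (SmithE' f - algebraMap ℂ _ c) = 0 := by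
    rw [map_sub η, AlgHom.commutes, Algebra.algebraMap_self, RingHom.id_apply, sub_self]
  have hdecomp : b * SmithE f
      = c • b + b * ((SmithE' f - algebraMap ℂ _ c : SmithRE f) : SmithAlgebra f) := by
    change _ = _ + b * (SmithE f - algebraMap ℂ _ c)
    rw [mul_sub, ← Algebra.commutes c b, ← Algebra.smul_def]
    abel
  rw [hdecomp]
  exact add_mem (Submodule.mem_sup_left (Submodule.smul_mem _ c hb))
    (Submodule.mem_sup_right (Submodule.subset_span ⟨b, _, hker, rfl⟩))

theorem RFH_sup_etaIdeal : Subalgebra.toSubmodule (SmithRFH f) ⊔ SmithEtaIdeal f η = ⊤ := by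
  refine Submodule.eq_top_of_one_mem_of_mul_mem (adjoin_E_F_H f)
    (Submodule.mem_sup_left (SmithRFH f).one_mem) ?_
  intro g hg s hs
  obtain ⟨a, ha, k, hk, rfl⟩ := Submodule.mem_sup.mp hs
  rw [mul_add]
  refine add_mem ?_ (Submodule.mem_sup_right (mul_mem_etaIdeal f η g hk))
  rcases hg with rfl | rfl | rfl
  · obtain ⟨a', ha', b', hb', h⟩ := E_mul_mem_RFH f ha
    rw [h]
    exact add_mem (Submodule.mem_sup_left ha') (mul_E_mem_sup f η hb')
  · exact Submodule.mem_sup_left ((SmithRFH f).mul_mem (F_mem_RFH f) ha)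
  · exact Submodule.mem_sup_left ((SmithRFH f).mul_mem (H_mem_RFH f) ha)

end SmithAlgebra

theorem smith_reduced_action_W_linear_general (f : ℂ[X]) (η : SmithRE f →ₐ[ℂ] ℂ)
    (π : SmithAlgebra f →ₗ[ℂ] SmithAlgebra f)
    (hrange : ∀ r : SmithAlgebra f, π r ∈ SmithRFH f)
    (hid : ∀ a ∈ SmithRFH f, π a = a)
    (hker : ∀ k ∈ SmithEtaIdeal f η, π k = 0)
    (x : SmithRE f) (u v : SmithAlgebra f)
    (hv : v ∈ π '' (Subalgebra.center ℂ (SmithAlgebra f) : Set (SmithAlgebra f))) :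
    π ((x : SmithAlgebra f) * (u * v)) - η x • (u * v) =
      (π ((x : SmithAlgebra f) * u) - η x • u) * v := by
  obtain ⟨z, hz, rfl⟩ := hv
  have hproj (r : SmithAlgebra f) : r - π r ∈ SmithEtaIdeal f η :=
    sub_map_mem_of_mem_sup hid hker (SmithAlgebra.RFH_sup_etaIdeal f η ▸ Submodule.mem_top)
  rw [← mul_assoc, map_mul_map_of_mem_center hrange hid hker
    (SmithAlgebra.mul_mem_etaIdeal f η) hproj hz, sub_mul, smul_mul_assoc]

/-- The `η`-reduced action `x • v = (xv)^η - η(x)v` is right `W(F,H)`-linear: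
for `x ∈ R(E)`, `u ∈ R(F,H)` and `v ∈ W(F,H) = π(Z(R))`, `x • (uv) = (x • u)·v`. -/
theorem smith_reduced_action_W_linear (f : ℂ[X]) (η : SmithRE f →ₐ[ℂ] ℂ)
    (hη : η (SmithE' f) ≠ 0)
    (π : SmithAlgebra f →ₗ[ℂ] SmithAlgebra f)
    (hrange : ∀ r : SmithAlgebra f, π r ∈ SmithRFH f)
    (hid : ∀ a ∈ SmithRFH f, π a = a)
    (hker : ∀ k ∈ SmithEtaIdeal f η, π k = 0)
    (x : SmithRE f) (u v : SmithAlgebra f)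
    (hu : u ∈ SmithRFH f)
    (hv : v ∈ π '' (Subalgebra.center ℂ (SmithAlgebra f) : Set (SmithAlgebra f))) :
    π ((x : SmithAlgebra f) * (u * v)) - η x • (u * v) =
      (π ((x : SmithAlgebra f) * u) - η x • u) * v :=
  smith_reduced_action_W_linear_general f η π hrange hid hker x u v hv
end
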